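/- Let G = (V,E) be a locally finite simple graph with countable vertex set and let p ∈ [0,1]^V satisfy p_v < 1 for all v ∈ V and Ξ_{G[U]}(p) > 0 for every finite U ⊆ V. Let Y be a BRF in the weak dependency class C_w^G(p), let X be distributed as the Bernoulli product field π_q with q := 1 − p, independent of Y, and let Z := X ∧ Y be the coordinatewise minimum. Then for every finite W ⊆ V, every v ∈ V ∖ W and every s ∈ {0,1}^W one has P(Z_W = s) > 0 and P(Z_v = 1 ∣ Z_W = s) ≥ q_v · Ξ_{G[W∪{v}]}(p) / Ξ_{G[W]}(p). -/

import Mathlib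

open MeasureTheory Finset
open scoped Classical

/-- The critical function Ξ_{G[W]}(p). -/
noncomputable def Xi {V : Type*} (G : SimpleGraph V) (W : Finset V) (p : V → ℝ) : ℝ :=
  ∑ T ∈ W.powerset,
    if ∀ u ∈ T, ∀ w ∈ T, ¬ G.Adj u w then ∏ v ∈ T, -(1 - p v) else 0

/-- Cylinder event. -/
def cylEvt {V : Type*} (S : Finset V) (s : V → Bool) : Set (V → Bool) :=
  {ω | ∀ v ∈ S, ω v = s v}

def WeakDep {V : Type*} (G : SimpleGraph V) (p : V → ℝ)
    (μ : Measure (V → Bool)) : Prop :=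
  IsProbabilityMeasure μ ∧
  ∀ (v : V) (S : Finset V), (∀ w ∈ S, w ≠ v ∧ ¬ G.Adj v w) →
    ∀ s : V → Bool, 0 < (μ (cylEvt S s)).toReal →
      p v ≤ (μ ({ω | ω v = true} ∩ cylEvt S s)).toReal / (μ (cylEvt S s)).toReal

def StrongDep {V : Type*} (G : SimpleGraph V) (p : V → ℝ)
    (μ : Measure (V → Bool)) : Prop :=
  IsProbabilityMeasure μ ∧
  (∀ v : V, (μ {ω | ω v = true}).toReal = p v) ∧
  ∀ (S₁ S₂ : Finset V), (∀ u ∈ S₁, ∀ w ∈ S₂, u ≠ w ∧ ¬ G.Adj u w) →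
    ∀ s₁ s₂ : V → Bool,
      μ (cylEvt S₁ s₁ ∩ cylEvt S₂ s₂) = μ (cylEvt S₁ s₁) * μ (cylEvt S₂ s₂)

/-- Expectation of f under product field π_c restricted to W. -/
noncomputable def prodExp {V : Type*} (c : V → ℝ) (W : Finset V)
    (f : (W → Bool) → ℝ) : ℝ :=
  ∑ s : W → Bool, (∏ v : W, if s v then c v.1 else 1 - c v.1) * f s

/-- μ stochastically dominates the Bernoulli product field π_c. -/
def DomProd {V : Type*} (μ : Measure (V → Bool)) (c : V → ℝ) : Prop :=
  ∀ (W : Finset V) (f : (W → Bool) → ℝ), Monotone f →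
    prodExp c W f ≤ ∫ ω, f (fun v => ω v.1) ∂μ

/-- ν is the Bernoulli product field π_c. -/
def IsProduct {V : Type*} (c : V → ℝ) (μ : Measure (V → Bool)) : Prop :=
  IsProbabilityMeasure μ ∧
  ∀ (S : Finset V) (s : V → Bool),
    μ (cylEvt S s) = ∏ v ∈ S, ENNReal.ofReal (if s v then c v else 1 - c v)

/-- μ is Shearer's measure μ_{G,p}. -/
def IsShearer {V : Type*} [Fintype V] (G : SimpleGraph V) (p : V → ℝ)
    (μ : Measure (V → Bool)) : Prop :=
  IsProbabilityMeasure μ ∧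
  ∀ W : Finset V,
    (μ {ω | ∀ v, (ω v = false ↔ v ∈ W)}).toReal =
      ∑ T ∈ (Finset.univ : Finset V).powerset,
        if W ⊆ T ∧ ∀ u ∈ T, ∀ w ∈ T, ¬ G.Adj u w
        then (-1 : ℝ) ^ (T.card - W.card) * ∏ v ∈ T, (1 - p v) else 0

/-- The law of the coordinatewise minimum of two independent BRFs with laws ν, μ. -/
noncomputable def minLaw {V : Type*} (ν μ : Measure (V → Bool)) : Measure (V → Bool) :=
  Measure.map (fun ω : (V → Bool) × (V → Bool) => fun v => ω.1 v && ω.2 v) (ν.prod μ)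

/-!
Split `W` according to `s` into `A = {s = 1}` and `B = {s = 0}`. Then
`P(Z_W = s) = ∏_{a ∈ A} q_a · R(A, B)` with `R(A, B) = P(Y ≡ 1 on A, Z ≡ 0 on B)`, a quantity
depending on the law of `Y` only, so the claim is the Shearer-type bound
`Ξ(U ∪ {v}) R(A, B) ≤ Ξ(U) R(A ∪ {v}, B)` for `U = A ∪ B`, together with `R(A, B) > 0`.
Both are proved by strong induction on `U`. If `v` has no neighbour in `U`, weak dependency gives
`R(A ∪ {v}, B) ≥ p_v R(A, B)` while `Ξ(U ∪ {v}) = p_v Ξ(U)`. Otherwise a neighbour `w` of `v` is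
removed from `A` (inclusion–exclusion for `Y_v = 1`, `Y_w = 1`) or from `B`
(`R(A, B ∪ {w}) = R(A, B) - q_w R(A ∪ {w}, B)`); since `w ∈ N(v)`, the term
`q_v Ξ(U ∖ N(v))` of the deletion recursion for `Ξ(U ∪ {v})` does not see `w`, and the two
inductive bounds combine.
-/

section Xi

variable {V : Type*} {G : SimpleGraph V} {p : V → ℝ}

lemma Xi_empty : Xi G ∅ p = 1 := by simp [Xi]

/-- An independent set of `G[U ∪ {v}]` either avoids `v` or is `v` together with an independent
set of `G[U ∖ N(v)]`. -/
lemma Xi_insert {v : V} {U : Finset V} (hv : v ∉ U) :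
    Xi G (insert v U) p = Xi G U p - (1 - p v) * Xi G (U.filter (¬ G.Adj v ·)) p := by
  have hindep : ∀ T ∈ U.powerset, ((∀ u ∈ insert v T, ∀ w ∈ insert v T, ¬ G.Adj u w) ↔
      T ⊆ U.filter (¬ G.Adj v ·) ∧ ∀ u ∈ T, ∀ w ∈ T, ¬ G.Adj u w) := by
    intro T hT
    rw [mem_powerset] at hT
    simp only [mem_insert, forall_eq_or_imp, SimpleGraph.irrefl, not_false_eq_true, true_and,
      subset_iff, mem_filter]
    constructor
    · rintro ⟨hv, hT'⟩
      exact ⟨fun u hu => ⟨hT hu, hv u hu⟩, fun u hu => (hT' u hu).2⟩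
    · rintro ⟨hN, hT'⟩
      exact ⟨fun u hu => (hN hu).2, fun u hu => ⟨fun h => (hN hu).2 h.symm, hT' u hu⟩⟩
  have hinsert : ∀ T ∈ U.powerset,
      (if ∀ u ∈ insert v T, ∀ w ∈ insert v T, ¬ G.Adj u w then ∏ u ∈ insert v T, -(1 - p u)
        else 0) = -(1 - p v) * if T ⊆ U.filter (¬ G.Adj v ·) ∧ ∀ u ∈ T, ∀ w ∈ T, ¬ G.Adj u w
          then ∏ u ∈ T, -(1 - p u) else 0 := by
    intro T hT
    have hvT : v ∉ T := fun h => hv (mem_powerset.1 hT h)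
    rw [if_congr (hindep T hT) rfl rfl]
    split_ifs <;> simp [prod_insert hvT]
  have hrestrict : ∑ T ∈ U.powerset, (if T ⊆ U.filter (¬ G.Adj v ·) ∧
      ∀ u ∈ T, ∀ w ∈ T, ¬ G.Adj u w then ∏ u ∈ T, -(1 - p u) else 0) =
        Xi G (U.filter (¬ G.Adj v ·)) p := by
    rw [Xi, ← sum_subset (powerset_mono.2 (filter_subset (¬ G.Adj v ·) U))]
    · exact sum_congr rfl fun T hT => if_congr (and_iff_right (mem_powerset.1 hT)) rfl rfl
    · intro T _ hT
      rw [if_neg fun h => hT (mem_powerset.2 h.1)]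
  rw [Xi, sum_powerset_insert hv, sum_congr rfl hinsert, ← mul_sum, hrestrict]
  unfold Xi
  ring

lemma Xi_singleton (v : V) : Xi G {v} p = p v := by
  rw [← insert_empty_eq, Xi_insert (notMem_empty v), filter_empty, Xi_empty]
  ring

lemma pos_of_Xi_pos (hint : ∀ U : Finset V, 0 < Xi G U p) (v : V) : 0 < p v :=
  Xi_singleton (G := G) (p := p) v ▸ hint {v}

lemma Xi_insert_le (hp1 : ∀ v, p v < 1) (hint : ∀ U : Finset V, 0 < Xi G U p)
    (v : V) (U : Finset V) : Xi G (insert v U) p ≤ Xi G U p := by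
  by_cases hv : v ∈ U
  · rw [insert_eq_of_mem hv]
  · rw [Xi_insert hv]
    nlinarith [hint (U.filter (¬ G.Adj v ·)), hp1 v]

lemma Xi_anti (hp1 : ∀ v, p v < 1) (hint : ∀ U : Finset V, 0 < Xi G U p)
    {U W : Finset V} (h : W ⊆ U) : Xi G U p ≤ Xi G W p := by
  rw [← union_sdiff_of_subset h]
  induction U \ W using Finset.induction_on with
  | empty => rw [union_empty]
  | insert d D _ ih => exact (union_insert d W D ▸ Xi_insert_le hp1 hint d (W ∪ D)).trans ih

end Xi

section Cylinder

variable {V : Type*}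

noncomputable def boolIndicator (T : Finset V) : V → Bool := fun u => decide (u ∈ T)

@[simp]
lemma boolIndicator_apply (T : Finset V) (u : V) : boolIndicator T u = decide (u ∈ T) := rfl

lemma measurableSet_coord_eq (v : V) (b : Bool) : MeasurableSet {ω : V → Bool | ω v = b} :=
  (measurableSet_singleton b).preimage (measurable_pi_apply v)

lemma measurableSet_cylEvt (S : Finset V) (s : V → Bool) : MeasurableSet (cylEvt S s) := by
  have : cylEvt S s = ⋂ v ∈ (S : Set V), {ω : V → Bool | ω v = s v} := by
    ext ω; simp [cylEvt]
  rw [this]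
  exact .biInter S.countable_toSet fun v _ => measurableSet_coord_eq v (s v)

lemma cylEvt_insert (v : V) (S : Finset V) (s : V → Bool) :
    cylEvt (insert v S) s = {ω | ω v = s v} ∩ cylEvt S s := by
  ext ω
  simp [cylEvt]

lemma cylEvt_congr {S : Finset V} {s s' : V → Bool} (h : ∀ u ∈ S, s u = s' u) :
    cylEvt S s = cylEvt S s' := by
  ext ω
  exact forall₂_congr fun u hu => by rw [h u hu]

lemma cylEvt_boolIndicator_insert {S T : Finset V} {v : V} (hv : v ∉ S) :
    cylEvt S (boolIndicator (insert v T)) = cylEvt S (boolIndicator T) :=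
  cylEvt_congr fun u hu => by
    simp [show u ≠ v from fun h => hv (h ▸ hu)]

end Cylinder

lemma measureReal_add_le_add_inter {Ω : Type*} [MeasurableSpace Ω] (μ : Measure Ω)
    [IsFiniteMeasure μ] {C E F : Set Ω} (hF : MeasurableSet F) (hEC : E ⊆ C) (hFC : F ⊆ C) :
    μ.real E + μ.real F ≤ μ.real C + μ.real (E ∩ F) := by
  rw [← measureReal_union_add_inter hF]
  exact add_le_add_left (measureReal_mono (Set.union_subset hEC hFC)) _

lemma measureReal_coord_false_inter {V : Type*} (μ : Measure (V → Bool)) [IsFiniteMeasure μ]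
    (v : V) (C : Set (V → Bool)) :
    μ.real ({ω | ω v = false} ∩ C) = μ.real C - μ.real ({ω | ω v = true} ∩ C) := by
  rw [eq_sub_iff_add_eq, add_comm, Set.inter_comm, Set.inter_comm _ C]
  convert measureReal_inter_add_sdiff (μ := μ) (s := C) (measurableSet_coord_eq v true)
  ext ω
  simp

lemma mul_measureReal_cylEvt_le_of_weakDep {V : Type*} {G : SimpleGraph V} {p : V → ℝ}
    {μ : Measure (V → Bool)} (hY : WeakDep G p μ) {v : V} {S : Finset V}
    (hN : ∀ w ∈ S, w ≠ v ∧ ¬ G.Adj v w) (s : V → Bool) :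
    p v * μ.real (cylEvt S s) ≤ μ.real ({ω | ω v = true} ∩ cylEvt S s) := by
  rcases measureReal_nonneg.eq_or_lt with hzero | hpos
  · rw [← hzero, mul_zero]
    exact measureReal_nonneg
  · exact (le_div_iff₀ hpos).1 (hY.2 v S hN s hpos)

section ThinnedMass

variable {V : Type*} (μ : Measure (V → Bool)) {p : V → ℝ}

/-- If `Y ∼ μ` and `X` is an independent Bernoulli field with `P(X_b = 0) = p b`, this is
`P(Y ≡ 1 on A, X ∧ Y ≡ 0 on B)` for disjoint `A` and `B`: the sum runs over the set `t ⊆ B`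
of sites where `Y` is `1` and therefore `X` has to be `0`. -/
noncomputable def thinnedMass (p : V → ℝ) (A B : Finset V) : ℝ :=
  ∑ t ∈ B.powerset, (∏ b ∈ t, p b) * μ.real (cylEvt (A ∪ B) (boolIndicator (A ∪ t)))

lemma thinnedMass_insert_left {v : V} {A B : Finset V} (hv : v ∉ A ∪ B) :
    thinnedMass μ p (insert v A) B = ∑ t ∈ B.powerset, (∏ b ∈ t, p b) *
      μ.real ({ω | ω v = true} ∩ cylEvt (A ∪ B) (boolIndicator (A ∪ t))) := by
  refine sum_congr rfl fun t _ => ?_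
  rw [insert_union, insert_union, cylEvt_insert, cylEvt_boolIndicator_insert hv]
  simp

lemma thinnedMass_empty [IsProbabilityMeasure μ] : thinnedMass μ p ∅ ∅ = 1 := by
  simp [thinnedMass, cylEvt]

variable (hp0 : ∀ v, 0 ≤ p v)
include hp0

lemma thinnedMass_nonneg (A B : Finset V) : 0 ≤ thinnedMass μ p A B :=
  sum_nonneg fun _ _ => mul_nonneg (prod_nonneg fun b _ => hp0 b) measureReal_nonneg

variable [IsFiniteMeasure μ]

lemma thinnedMass_insert_left_le {v : V} {A B : Finset V} (hv : v ∉ A ∪ B) :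
    thinnedMass μ p (insert v A) B ≤ thinnedMass μ p A B := by
  rw [thinnedMass_insert_left μ hv]
  exact sum_le_sum fun t _ => mul_le_mul_of_nonneg_left
    (measureReal_mono Set.inter_subset_right) (prod_nonneg fun b _ => hp0 b)

lemma thinnedMass_add_le {v w : V} {A B : Finset V} (hv : v ∉ A ∪ B) (hw : w ∉ A ∪ B)
    (hvw : v ≠ w) :
    thinnedMass μ p (insert v A) B + thinnedMass μ p (insert w A) B ≤
      thinnedMass μ p A B + thinnedMass μ p (insert v (insert w A)) B := by
  have hv' : v ∉ insert w A ∪ B := by simp_all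
  rw [thinnedMass_insert_left μ hv, thinnedMass_insert_left μ hw,
    thinnedMass_insert_left μ hv', thinnedMass, ← sum_add_distrib, ← sum_add_distrib]
  refine sum_le_sum fun t _ => ?_
  rw [← mul_add, ← mul_add, insert_union, insert_union, cylEvt_insert,
    cylEvt_boolIndicator_insert hw]
  refine mul_le_mul_of_nonneg_left ?_ (prod_nonneg fun b _ => hp0 b)
  set C := cylEvt (A ∪ B) (boolIndicator (A ∪ t))
  have hinter : {ω : V → Bool | ω v = true} ∩ C ∩ ({ω | ω w = true} ∩ C) =
      {ω | ω v = true} ∩ ({ω | ω w = boolIndicator (insert w (A ∪ t)) w} ∩ C) := by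
    ext ω
    simp only [Set.mem_inter_iff, Set.mem_ofPred_eq, boolIndicator_apply, mem_insert, true_or,
      decide_true]
    tauto
  rw [← hinter]
  exact measureReal_add_le_add_inter μ ((measurableSet_coord_eq w true).inter
    (measurableSet_cylEvt _ _)) Set.inter_subset_right Set.inter_subset_right

omit hp0 in
lemma thinnedMass_insert_right {w : V} {A B : Finset V} (hw : w ∉ A ∪ B) :
    thinnedMass μ p A (insert w B) =
      thinnedMass μ p A B - (1 - p w) * thinnedMass μ p (insert w A) B := by
  have hwB : w ∉ B := fun h => hw (mem_union_right A h)
  rw [thinnedMass, sum_powerset_insert hwB, thinnedMass_insert_left μ hw, thinnedMass,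
    mul_sum, ← sum_sub_distrib, ← sum_add_distrib]
  refine sum_congr rfl fun t ht => ?_
  have hwt : w ∉ A ∪ t := fun h =>
    hw (union_subset_union_right (mem_powerset.1 ht) h)
  have hcyl_false : cylEvt (A ∪ insert w B) (boolIndicator (A ∪ t)) =
      {ω | ω w = false} ∩ cylEvt (A ∪ B) (boolIndicator (A ∪ t)) := by
    simp [union_insert, cylEvt_insert, hwt]
  have hcyl_true : cylEvt (A ∪ insert w B) (boolIndicator (A ∪ insert w t)) =
      {ω | ω w = true} ∩ cylEvt (A ∪ B) (boolIndicator (A ∪ t)) := by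
    simp [union_insert, cylEvt_insert, cylEvt_boolIndicator_insert hw]
  rw [prod_insert (fun h => hwt (mem_union_right A h)), hcyl_false, hcyl_true,
    measureReal_coord_false_inter]
  ring

omit [IsFiniteMeasure μ] in
lemma mul_thinnedMass_le_of_weakDep {G : SimpleGraph V} (hY : WeakDep G p μ) {v : V}
    {A B : Finset V} (hN : ∀ u ∈ A ∪ B, u ≠ v ∧ ¬ G.Adj v u) :
    p v * thinnedMass μ p A B ≤ thinnedMass μ p (insert v A) B := by
  rw [thinnedMass_insert_left μ fun h => (hN v h).1 rfl, thinnedMass, mul_sum]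
  refine sum_le_sum fun t _ => ?_
  rw [mul_left_comm]
  exact mul_le_mul_of_nonneg_left (mul_measureReal_cylEvt_le_of_weakDep hY hN _)
    (prod_nonneg fun b _ => hp0 b)

end ThinnedMass

lemma exists_eq_insert_of_mem {α : Type*} {a : α} {s : Finset α} (h : a ∈ s) :
    ∃ t, a ∉ t ∧ s = insert a t :=
  ⟨s.erase a, notMem_erase a s, (insert_erase h).symm⟩

section Induction

variable {V : Type*} {G : SimpleGraph V} {p : V → ℝ} {μ : Measure (V → Bool)}
  (hp1 : ∀ v, p v < 1) (hint : ∀ U : Finset V, 0 < Xi G U p)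

local notation "R" => thinnedMass μ p

include hp1 hint

lemma Xi_mul_thinnedMass_le_of_adj_left [IsFiniteMeasure μ] {v w : V} {A B : Finset V}
    (hw : w ∉ A ∪ B) (hv : v ∉ insert w A ∪ B) (hadj : G.Adj v w)
    (hbv : Xi G (insert v (A ∪ B)) p * R A B ≤ Xi G (A ∪ B) p * R (insert v A) B)
    (hbw : Xi G (insert w (A ∪ B)) p * R A B ≤ Xi G (A ∪ B) p * R (insert w A) B) :
    Xi G (insert v (insert w A ∪ B)) p * R (insert w A) B ≤
      Xi G (insert w A ∪ B) p * R (insert v (insert w A)) B := by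
  rw [insert_union] at hv ⊢
  have hvw : v ≠ w := G.ne_of_adj hadj
  have hvU : v ∉ A ∪ B := fun h => hv (mem_insert_of_mem h)
  have hXi : Xi G (insert v (insert w (A ∪ B))) p =
      Xi G (insert w (A ∪ B)) p - (Xi G (A ∪ B) p - Xi G (insert v (A ∪ B)) p) := by
    rw [Xi_insert hv, Xi_insert hvU, filter_insert, if_neg (not_not.2 hadj)]
    ring
  have hie := thinnedMass_add_le μ (fun v => (pos_of_Xi_pos hint v).le) hvU hw hvw
  have h0 := hint (A ∪ B)
  have hw0 := hint (insert w (A ∪ B))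
  have hD := Xi_insert_le hp1 hint v (A ∪ B)
  rw [hXi]
  refine le_of_mul_le_mul_left ?_ h0
  -- With `D = Ξ(U) - Ξ(U ∪ {v}) = Ξ(U ∪ {w}) - Ξ(U ∪ {v, w})`, inclusion–exclusion and the bound
  -- for `v` reduce the goal to `D · (Ξ(U) R(A ∪ {w}, B) - Ξ(U ∪ {w}) R(A, B)) ≥ 0`.
  nlinarith [mul_le_mul_of_nonneg_left hie (mul_pos h0 hw0).le,
    mul_le_mul_of_nonneg_left hbv hw0.le, mul_nonneg (sub_nonneg.2 hD) (sub_nonneg.2 hbw)]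

lemma Xi_mul_thinnedMass_le_of_adj_right [IsFiniteMeasure μ] {v w : V} {A B : Finset V}
    (hw : w ∉ A ∪ B) (hv : v ∉ A ∪ insert w B) (hadj : G.Adj v w)
    (hbv : Xi G (insert v (A ∪ B)) p * R A B ≤ Xi G (A ∪ B) p * R (insert v A) B) :
    Xi G (insert v (A ∪ insert w B)) p * R A (insert w B) ≤
      Xi G (A ∪ insert w B) p * R (insert v A) (insert w B) := by
  have hp0 : ∀ v, 0 ≤ p v := fun v => (pos_of_Xi_pos hint v).le
  rw [union_insert] at hv ⊢
  have hvw : v ≠ w := G.ne_of_adj hadj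
  have hwv : w ∉ insert v A ∪ B := by
    rw [insert_union, mem_insert, not_or]
    exact ⟨hvw.symm, hw⟩
  set S := Xi G ((A ∪ B).filter (¬ G.Adj w ·)) p
  have hXw : Xi G (insert w (A ∪ B)) p = Xi G (A ∪ B) p - (1 - p w) * S := Xi_insert hw
  have hXvw : Xi G (insert v (insert w (A ∪ B))) p =
      Xi G (insert v (A ∪ B)) p - (1 - p w) * S := by
    rw [insert_comm, Xi_insert (by rwa [← insert_union]), filter_insert,
      if_neg (not_not.2 hadj.symm)]
  rw [hXw, hXvw, thinnedMass_insert_right μ hw,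
    thinnedMass_insert_right μ hwv]
  have h0 := hint (A ∪ B)
  have hw0 := hXw ▸ hint (insert w (A ∪ B))
  have hq := sub_nonneg.2 (hp1 w).le
  have hD := Xi_insert_le hp1 hint v (A ∪ B)
  have hS : Xi G (A ∪ B) p ≤ S := Xi_anti hp1 hint (filter_subset _ _)
  have hwa := thinnedMass_insert_left_le μ hp0 hw
  have hvwa : R (insert w (insert v A)) B ≤ R (insert w A) B := by
    rw [insert_comm]
    exact thinnedMass_insert_left_le μ hp0 (by rwa [insert_union])
  have hw_nonneg := thinnedMass_nonneg μ hp0 (insert w A) B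
  refine le_of_mul_le_mul_left ?_ h0
  -- `Ξ(U)` times the gap between the two sides is exactly the sum of the three products below.
  nlinarith [mul_le_mul_of_nonneg_left hbv hw0.le,
    mul_nonneg (mul_nonneg hq hw0.le) (mul_nonneg h0.le (sub_nonneg.2 hvwa)),
    mul_nonneg (mul_nonneg hq (sub_nonneg.2 hD)) (sub_nonneg.2
      (mul_le_mul hS hwa hw_nonneg (h0.le.trans hS)))]

omit hp1 in
lemma Xi_mul_thinnedMass_le_of_weakDep (hY : WeakDep G p μ) {v : V} {A B : Finset V}
    (hN : ∀ u ∈ A ∪ B, u ≠ v ∧ ¬ G.Adj v u) :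
    Xi G (insert v (A ∪ B)) p * R A B ≤ Xi G (A ∪ B) p * R (insert v A) B := by
  have hXi : Xi G (insert v (A ∪ B)) p = p v * Xi G (A ∪ B) p := by
    rw [Xi_insert fun h => (hN v h).1 rfl, filter_true_of_mem fun u hu => (hN u hu).2]
    ring
  rw [hXi, mul_right_comm, mul_comm (Xi G _ p)]
  exact mul_le_mul_of_nonneg_right
    (mul_thinnedMass_le_of_weakDep μ (fun v => (pos_of_Xi_pos hint v).le) hY hN) (hint _).le

omit hp1 in
lemma thinnedMass_insert_left_pos {w : V} {A B : Finset V} (hpos : 0 < R A B)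
    (hbw : Xi G (insert w (A ∪ B)) p * R A B ≤ Xi G (A ∪ B) p * R (insert w A) B) :
    0 < R (insert w A) B :=
  pos_of_mul_pos_right ((mul_pos (hint _) hpos).trans_le hbw) (hint _).le

lemma thinnedMass_insert_right_pos [IsFiniteMeasure μ] {w : V} {A B : Finset V}
    (hw : w ∉ A ∪ B) (hpos : 0 < R A B) : 0 < R A (insert w B) := by
  have hp0 : ∀ v, 0 ≤ p v := fun v => (pos_of_Xi_pos hint v).le
  rw [thinnedMass_insert_right μ hw]
  nlinarith [pos_of_Xi_pos hint w, hp1 w, thinnedMass_insert_left_le μ hp0 hw,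
    thinnedMass_nonneg μ hp0 (insert w A) B]

theorem thinnedMass_pos_and_Xi_mul_le (hY : WeakDep G p μ) {A B : Finset V}
    (hAB : Disjoint A B) : 0 < R A B ∧
      ∀ v ∉ A ∪ B, Xi G (insert v (A ∪ B)) p * R A B ≤ Xi G (A ∪ B) p * R (insert v A) B := by
  have := hY.1
  induction hU : A ∪ B using Finset.strongInduction generalizing A B with
  | H U ih =>
  subst hU
  have pos : 0 < R A B := by
    rcases B.eq_empty_or_nonempty with rfl | ⟨w, hwB⟩
    · rcases A.eq_empty_or_nonempty with rfl | ⟨w, hwA⟩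
      · rw [thinnedMass_empty]
        exact one_pos
      obtain ⟨A, hwA', rfl⟩ := exists_eq_insert_of_mem hwA
      have hw : w ∉ A ∪ ∅ := by rwa [union_empty]
      obtain ⟨hpos, hb⟩ :=
        ih _ (insert_union w A ∅ ▸ ssubset_insert hw) (disjoint_empty_right A) rfl
      exact thinnedMass_insert_left_pos hint hpos (hb w hw)
    · obtain ⟨B, hwB', rfl⟩ := exists_eq_insert_of_mem hwB
      rw [disjoint_insert_right] at hAB
      have hw : w ∉ A ∪ B := by simp [hAB.1, hwB']
      exact thinnedMass_insert_right_pos hp1 hint hw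
        (ih _ (union_insert w A B ▸ ssubset_insert hw) hAB.2 rfl).1
  refine ⟨pos, fun v hv => ?_⟩
  by_cases hA : ∃ w ∈ A, G.Adj v w
  · obtain ⟨w, hwA, hadj⟩ := hA
    obtain ⟨A, hwA', rfl⟩ := exists_eq_insert_of_mem hwA
    rw [disjoint_insert_left] at hAB
    have hw : w ∉ A ∪ B := by simp [hAB.1, hwA']
    have hvU : v ∉ A ∪ B := fun h => hv (insert_union w A B ▸ mem_insert_of_mem h)
    obtain ⟨-, hb⟩ := ih _ (insert_union w A B ▸ ssubset_insert hw) hAB.2 rfl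
    exact Xi_mul_thinnedMass_le_of_adj_left hp1 hint hw hv hadj (hb v hvU) (hb w hw)
  by_cases hB : ∃ w ∈ B, G.Adj v w
  · obtain ⟨w, hwB, hadj⟩ := hB
    obtain ⟨B, hwB', rfl⟩ := exists_eq_insert_of_mem hwB
    rw [disjoint_insert_right] at hAB
    have hw : w ∉ A ∪ B := by simp [hAB.1, hwB']
    have hvU : v ∉ A ∪ B := fun h => hv (union_insert w A B ▸ mem_insert_of_mem h)
    obtain ⟨-, hb⟩ := ih _ (union_insert w A B ▸ ssubset_insert hw) hAB.2 rfl
    exact Xi_mul_thinnedMass_le_of_adj_right hp1 hint hw hv hadj (hb v hvU)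
  push Not at hA hB
  refine Xi_mul_thinnedMass_le_of_weakDep hint hY fun u hu => ⟨fun h => hv (h ▸ hu), ?_⟩
  rcases mem_union.1 hu with hu | hu
  exacts [hA u hu, hB u hu]

end Induction

section MinLaw

variable {V : Type*}

lemma IsProduct.measureReal_cylEvt {c : V → ℝ} {ν : Measure (V → Bool)} (hX : IsProduct c ν)
    (hc0 : ∀ v, 0 ≤ c v) (hc1 : ∀ v, c v ≤ 1) (S : Finset V) (s : V → Bool) :
    ν.real (cylEvt S s) = ∏ v ∈ S, if s v then c v else 1 - c v := by
  rw [measureReal_def, hX.2, ENNReal.toReal_prod]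
  refine prod_congr rfl fun v _ => ENNReal.toReal_ofReal ?_
  split_ifs
  exacts [hc0 v, sub_nonneg.2 (hc1 v)]

lemma pairwiseDisjoint_cylEvt_boolIndicator {A B : Finset V} (hAB : Disjoint A B) :
    (B.powerset : Set (Finset V)).PairwiseDisjoint
      fun t => cylEvt (A ∪ B) (boolIndicator (A ∪ t)) := by
  intro t₁ ht₁ t₂ ht₂ hne
  refine Set.disjoint_left.2 fun ω h₁ h₂ => hne (Finset.ext fun b => ?_)
  rw [coe_powerset, Set.mem_preimage, Set.mem_powerset_iff, coe_subset] at ht₁ ht₂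
  by_cases hb : b ∈ B
  · have := (h₁ b (mem_union_right A hb)).symm.trans (h₂ b (mem_union_right A hb))
    simpa [disjoint_right.1 hAB hb] using this
  · exact iff_of_false (fun h => hb (ht₁ h)) (fun h => hb (ht₂ h))

/-- `t` is the set of sites of `B` where `y = 1`, and hence `x = 0`. -/
lemma preimage_and_cylEvt {A B : Finset V} (hAB : Disjoint A B) :
    (fun ω : (V → Bool) × (V → Bool) => fun v => ω.1 v && ω.2 v) ⁻¹'
        cylEvt (A ∪ B) (boolIndicator A) =
      ⋃ t ∈ B.powerset, cylEvt (A ∪ t) (boolIndicator A) ×ˢ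
        cylEvt (A ∪ B) (boolIndicator (A ∪ t)) := by
  ext ⟨x, y⟩
  simp only [Set.mem_preimage, Set.mem_iUnion, Set.mem_prod, mem_powerset, cylEvt,
    Set.mem_ofPred_eq, boolIndicator_apply, mem_union, exists_prop]
  constructor
  · intro h
    have hA : ∀ u ∈ A, x u = true ∧ y u = true := fun u hu => by simpa [hu] using h u (Or.inl hu)
    refine ⟨B.filter (y · = true), filter_subset _ B, fun u hu => ?_, fun u hu => ?_⟩
    · rcases hu with hu | hu
      · simp [hu, (hA u hu).1]
      · obtain ⟨huB, hyu⟩ := mem_filter.1 hu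
        simpa [hyu, disjoint_right.1 hAB huB] using h u (Or.inr huB)
    · by_cases huA : u ∈ A
      · simp [huA, (hA u huA).2]
      · simp [huA, hu.resolve_left huA]
  · rintro ⟨t, -, hx, hy⟩ u hu
    have hyu := hy u hu
    by_cases huA : u ∈ A
    · simp_all
    · by_cases hut : u ∈ t <;> simp_all

lemma measureReal_minLaw_cylEvt {p : V → ℝ} {μ ν : Measure (V → Bool)} [IsFiniteMeasure μ]
    (hp0 : ∀ v, 0 ≤ p v) (hp1 : ∀ v, p v ≤ 1) (hX : IsProduct (fun v => 1 - p v) ν)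
    {A B : Finset V} (hAB : Disjoint A B) :
    (minLaw ν μ).real (cylEvt (A ∪ B) (boolIndicator A)) =
      (∏ a ∈ A, (1 - p a)) * thinnedMass μ p A B := by
  have := hX.1
  have hdisj : (B.powerset : Set (Finset V)).PairwiseDisjoint fun t =>
      cylEvt (A ∪ t) (boolIndicator A) ×ˢ cylEvt (A ∪ B) (boolIndicator (A ∪ t)) :=
    fun t₁ ht₁ t₂ ht₂ hne => Set.disjoint_prod.2
      (Or.inr (pairwiseDisjoint_cylEvt_boolIndicator hAB ht₁ ht₂ hne))
  rw [minLaw, map_measureReal_apply (by fun_prop) (measurableSet_cylEvt _ _),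
    preimage_and_cylEvt hAB, measureReal_biUnion_finset hdisj
      fun t _ => (measurableSet_cylEvt _ _).prod (measurableSet_cylEvt _ _),
    thinnedMass, mul_sum]
  refine sum_congr rfl fun t ht => ?_
  have hAt : Disjoint A t := disjoint_of_subset_right (mem_powerset.1 ht) hAB
  rw [measureReal_prod_prod, hX.measureReal_cylEvt (fun v => sub_nonneg.2 (hp1 v))
    (fun v => sub_le_self _ (hp0 v)), prod_union hAt, ← mul_assoc]
  congr 2
  · exact prod_congr rfl fun a ha => by simp [ha]
  · exact prod_congr rfl fun b hb => by simp [disjoint_right.1 hAt hb]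

end MinLaw

theorem minLaw_pos_and_Xi_ratio_le {V : Type*} {G : SimpleGraph V} {p : V → ℝ}
    (hp1 : ∀ v, p v < 1) (hint : ∀ U : Finset V, 0 < Xi G U p) {μ ν : Measure (V → Bool)}
    (hY : WeakDep G p μ) (hX : IsProduct (fun v => 1 - p v) ν) {A B : Finset V}
    (hAB : Disjoint A B) {v : V} (hv : v ∉ A ∪ B) :
    0 < (minLaw ν μ).real (cylEvt (A ∪ B) (boolIndicator A)) ∧
      (1 - p v) * (Xi G (insert v (A ∪ B)) p / Xi G (A ∪ B) p) ≤
        (minLaw ν μ).real ({ω | ω v = true} ∩ cylEvt (A ∪ B) (boolIndicator A)) /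
          (minLaw ν μ).real (cylEvt (A ∪ B) (boolIndicator A)) := by
  have := hY.1
  have hp0 : ∀ v, 0 ≤ p v := fun v => (pos_of_Xi_pos hint v).le
  have hcyl_v : {ω | ω v = true} ∩ cylEvt (A ∪ B) (boolIndicator A) =
      cylEvt (insert v A ∪ B) (boolIndicator (insert v A)) := by
    rw [insert_union, cylEvt_insert, cylEvt_boolIndicator_insert hv]
    simp
  obtain ⟨hpos, hbound⟩ := thinnedMass_pos_and_Xi_mul_le hp1 hint hY hAB
  have hq : 0 < ∏ a ∈ A, (1 - p a) := prod_pos fun a _ => sub_pos.2 (hp1 a)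
  rw [hcyl_v, measureReal_minLaw_cylEvt hp0 (fun v => (hp1 v).le) hX hAB,
    measureReal_minLaw_cylEvt hp0 (fun v => (hp1 v).le) hX
      (disjoint_insert_left.2 ⟨fun h => hv (mem_union_right A h), hAB⟩),
    prod_insert fun h => hv (mem_union_left B h)]
  refine ⟨mul_pos hq hpos, ?_⟩
  have hratio : Xi G (insert v (A ∪ B)) p / Xi G (A ∪ B) p * thinnedMass μ p A B ≤
      thinnedMass μ p (insert v A) B := by
    rw [div_mul_eq_mul_div, div_le_iff₀ (hint _), mul_comm _ (Xi G _ p)]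
    exact hbound v hv
  rw [le_div_iff₀ (mul_pos hq hpos)]
  calc _ = ((1 - p v) * ∏ a ∈ A, (1 - p a)) *
        (Xi G (insert v (A ∪ B)) p / Xi G (A ∪ B) p * thinnedMass μ p A B) := by ring
    _ ≤ _ := mul_le_mul_of_nonneg_left hratio (mul_nonneg (sub_nonneg.2 (hp1 v).le) hq.le)

theorem stmt16_general {V : Type*} (G : SimpleGraph V)
    (p : V → ℝ) (hp1 : ∀ v, p v < 1)
    (hint : ∀ U : Finset V, 0 < Xi G U p)
    (μ ν : Measure (V → Bool))
    (hY : WeakDep G p μ) (hX : IsProduct (fun v => 1 - p v) ν) :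
    ∀ (W : Finset V) (v : V), v ∉ W → ∀ s : V → Bool,
      0 < ((minLaw ν μ) (cylEvt W s)).toReal ∧
      (1 - p v) * (Xi G (insert v W) p / Xi G W p) ≤
        ((minLaw ν μ) ({ω | ω v = true} ∩ cylEvt W s)).toReal /
          ((minLaw ν μ) (cylEvt W s)).toReal := by
  intro W v hvW s
  set A := W.filter (s · = true)
  set B := W.filter (¬ s · = true)
  have hW : A ∪ B = W := filter_union_filter_not_eq _ W
  have hcyl : cylEvt (A ∪ B) s = cylEvt (A ∪ B) (boolIndicator A) :=
    cylEvt_congr fun u hu => by by_cases h : s u = true <;> simp_all [A]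
  rw [← hW] at hvW ⊢
  simp only [← measureReal_def, hcyl]
  exact minLaw_pos_and_Xi_ratio_le hp1 hint hY hX (disjoint_filter_filter_not W W _) hvW

/-- conditional minorization for Z = X ∧ Y, where Y is in the weak
dependency class and X is an independent π_q product field. -/
theorem stmt16 {V : Type*} [Countable V] (G : SimpleGraph V)
    (hlf : ∀ v : V, (G.neighborSet v).Finite)
    (p : V → ℝ) (hp0 : ∀ v, 0 ≤ p v) (hp1 : ∀ v, p v < 1)
    (hint : ∀ U : Finset V, 0 < Xi G U p)
    (μ ν : Measure (V → Bool))
    (hY : WeakDep G p μ) (hX : IsProduct (fun v => 1 - p v) ν) :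
    ∀ (W : Finset V) (v : V), v ∉ W → ∀ s : V → Bool,
      0 < ((minLaw ν μ) (cylEvt W s)).toReal ∧
      (1 - p v) * (Xi G (insert v W) p / Xi G W p) ≤
        ((minLaw ν μ) ({ω | ω v = true} ∩ cylEvt W s)).toReal /
          ((minLaw ν μ) (cylEvt W s)).toReal :=
  stmt16_general G p hp1 hint μ ν hY hX
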